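/- Let U be a complex vector space, let X₀, X₁ ⊆ U be subspaces equipped with norms N₀, N₁ respectively, and let K(x,t) denote the associated K-functional. Let x ∈ X₀ ∩ X₁ and suppose there exists a linear map P : U → U with finite-dimensional range such that Px = x, P(X₀) ⊆ X₀ with N₀(Pv) ≤ N₀(v) for all v ∈ X₀, and P(X₁) ⊆ X₁ with N₁(Pv) ≤ N₁(v) for all v ∈ X₁. Then lim_{t→∞} K(x,t) = N₀(x) and lim_{t→0⁺} K(x,t)/t = N₁(x). (This is the content of Proposition 3.10 for couples with a common 1-FDD: the couple is normal at every finitely supported vector, since the FDD projections provide such maps P.) -/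

import Mathlib

open Set Filter Topology

noncomputable section

/-- `N` is a norm on the subspace `X` of the complex vector space `U`. -/
structure IsNormOn (U : Type*) [AddCommGroup U] [Module ℂ U]
    (X : Submodule ℂ U) (N : U → ℝ) : Prop where
  eq_zero_iff : ∀ x ∈ X, (N x = 0 ↔ x = 0)
  smul : ∀ (a : ℂ), ∀ x ∈ X, N (a • x) = ‖a‖ * N x
  add_le : ∀ x ∈ X, ∀ y ∈ X, N (x + y) ≤ N x + N y

/-- The K-functional of the couple of subspaces `(X₀, N₀)`, `(X₁, N₁)` of `U`:
`K(x,t) = inf { N₀ x₀ + t·N₁ x₁ : x₀ ∈ X₀, x₁ ∈ X₁, x₀ + x₁ = x }`. -/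
def Kfunctional {U : Type*} [AddCommGroup U] [Module ℂ U]
    (X₀ X₁ : Submodule ℂ U) (N₀ N₁ : U → ℝ) (x : U) (t : ℝ) : ℝ :=
  sInf {v : ℝ | ∃ x₀ ∈ X₀, ∃ x₁ ∈ X₁, x₀ + x₁ = x ∧ v = N₀ x₀ + t * N₁ x₁}

/-! Since `P` contracts both norms and fixes `x`, a decomposition `x = x₀ + x₁` may be replaced by
`x = P x₀ + P x₁`, where `P x₁ = x - P x₀` lies in the finite-dimensional space
`X₀ ∩ X₁ ∩ range P`. All norms on that space are equivalent, so `N₀ (P x₁) ≤ C · N₁ x₁` and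
`N₀ x ≤ N₀ x₀ + t · N₁ x₁` once `t ≥ C`: the K-functional equals `N₀ x` for large `t`.
The limit at `0⁺` is the same statement for the swapped couple, because
`K(x,t)/t` is its K-functional at `1/t`. -/

theorem Seminorm.exists_le_mul_of_finiteDimensional {𝕜 V : Type*} [NontriviallyNormedField 𝕜]
    [CompleteSpace 𝕜] [AddCommGroup V] [Module 𝕜 V] [FiniteDimensional 𝕜 V]
    (p q : Seminorm 𝕜 V) (hq : ∀ v, q v = 0 → v = 0) :
    ∃ C, 0 ≤ C ∧ ∀ v, p v ≤ C * q v := by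
  let : NormedAddCommGroup V := AddGroupNorm.toNormedAddCommGroup
    { q.toAddGroupSeminorm with eq_zero_of_map_eq_zero' := hq }
  let : NormedSpace 𝕜 V := ⟨fun a v => (map_smul_eq_mul q a v).le⟩
  let b := Module.finBasis 𝕜 V
  let f := LinearMap.toContinuousLinearMap b.equivFun.toLinearMap
  refine ⟨‖f‖ * ∑ i, p (b i), by positivity, fun v => ?_⟩
  calc p v = p (∑ i, f v i • b i) := congrArg p (b.sum_equivFun v).symm
    _ ≤ ∑ i, ‖f v i‖ * p (b i) := by
        simpa only [map_smul_eq_mul] using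
          Finset.le_sum_of_subadditive p (map_zero p).le (map_add_le_add p) Finset.univ
            (fun i => f v i • b i)
    _ ≤ ∑ i, ‖f‖ * ‖v‖ * p (b i) := by
        gcongr with i
        exact (norm_le_pi_norm (f v) i).trans (f.le_opNorm v)
    _ = ‖f‖ * (∑ i, p (b i)) * ‖v‖ := by
        rw [Finset.mul_sum, Finset.sum_mul]
        exact Finset.sum_congr rfl fun i _ => by ring

section KFunctional

variable {U : Type*} [AddCommGroup U] [Module ℂ U]

namespace IsNormOn

variable {X : Submodule ℂ U} {N : U → ℝ}

def toSeminorm (h : IsNormOn U X N) : Seminorm ℂ X :=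
  Seminorm.of (fun v => N v) (fun v w => h.add_le v v.2 w w.2) (fun a v => h.smul a v v.2)

theorem map_zero (h : IsNormOn U X N) : N 0 = 0 :=
  _root_.map_zero h.toSeminorm

theorem nonneg (h : IsNormOn U X N) {v : U} (hv : v ∈ X) : 0 ≤ N v :=
  apply_nonneg h.toSeminorm ⟨v, hv⟩

theorem exists_le_mul_of_finiteDimensional {X' : Submodule ℂ U} {N' : U → ℝ}
    (h : IsNormOn U X N) (h' : IsNormOn U X' N') (Z : Submodule ℂ U) [FiniteDimensional ℂ Z]
    (hZ : Z ≤ X) (hZ' : Z ≤ X') : ∃ C, 0 ≤ C ∧ ∀ z ∈ Z, N z ≤ C * N' z := by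
  obtain ⟨C, hC, hle⟩ := Seminorm.exists_le_mul_of_finiteDimensional
    (h.toSeminorm.comp (Submodule.inclusion hZ)) (h'.toSeminorm.comp (Submodule.inclusion hZ'))
    (fun z hz => Subtype.ext ((h'.eq_zero_iff z (hZ' z.2)).mp hz))
  exact ⟨C, hC, fun z hz => hle ⟨z, hz⟩⟩

end IsNormOn

variable {X₀ X₁ : Submodule ℂ U} {N₀ N₁ : U → ℝ} {x : U}

theorem Kfunctional_eq_left_of_forall_le {t : ℝ} (hx₀ : x ∈ X₀) (hN₁ : N₁ 0 = 0)
    (h : ∀ x₀ ∈ X₀, ∀ x₁ ∈ X₁, x₀ + x₁ = x → N₀ x ≤ N₀ x₀ + t * N₁ x₁) :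
    Kfunctional X₀ X₁ N₀ N₁ x t = N₀ x := by
  refine IsLeast.csInf_eq ⟨⟨x, hx₀, 0, X₁.zero_mem, add_zero x, by simp [hN₁]⟩, ?_⟩
  rintro _ ⟨x₀, hy₀, x₁, hy₁, hsum, rfl⟩
  exact h x₀ hy₀ x₁ hy₁ hsum

theorem Kfunctional_div_eq_swap {t : ℝ} (ht : 0 < t) :
    Kfunctional X₀ X₁ N₀ N₁ x t / t = Kfunctional X₁ X₀ N₁ N₀ x t⁻¹ := by
  rw [div_eq_inv_mul, Kfunctional, Kfunctional, ← smul_eq_mul,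
    ← Real.sInf_smul_of_nonneg (inv_nonneg.mpr ht.le)]
  congr 1
  ext v
  simp only [Set.mem_smul_set, Set.mem_ofPred_eq, smul_eq_mul]
  constructor
  · rintro ⟨_, ⟨x₀, hx₀, x₁, hx₁, hsum, rfl⟩, rfl⟩
    refine ⟨x₁, hx₁, x₀, hx₀, by rwa [add_comm], ?_⟩
    field_simp
    ring
  · rintro ⟨x₁, hx₁, x₀, hx₀, hsum, rfl⟩
    refine ⟨_, ⟨x₀, hx₀, x₁, hx₁, by rwa [add_comm], rfl⟩, ?_⟩
    field_simp
    ring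

theorem eventually_Kfunctional_eq_left (h₀ : IsNormOn U X₀ N₀) (h₁ : IsNormOn U X₁ N₁)
    (hx₀ : x ∈ X₀) (P : U →ₗ[ℂ] U) [FiniteDimensional ℂ (LinearMap.range P)] (hPx : P x = x)
    (hP₀ : ∀ v ∈ X₀, P v ∈ X₀ ∧ N₀ (P v) ≤ N₀ v) (hP₁ : ∀ v ∈ X₁, P v ∈ X₁ ∧ N₁ (P v) ≤ N₁ v) :
    ∀ᶠ t in atTop, Kfunctional X₀ X₁ N₀ N₁ x t = N₀ x := by
  let Z := X₀ ⊓ X₁ ⊓ LinearMap.range P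
  have : FiniteDimensional ℂ Z := Submodule.finiteDimensional_of_le inf_le_right
  obtain ⟨C, hC, hle⟩ := h₀.exists_le_mul_of_finiteDimensional h₁ Z
    (inf_le_left.trans inf_le_left) (inf_le_left.trans inf_le_right)
  filter_upwards [eventually_ge_atTop C] with t ht
  refine Kfunctional_eq_left_of_forall_le hx₀ h₁.map_zero fun x₀ hx₀' x₁ hx₁ hsum => ?_
  obtain ⟨hPx₀, hPx₀_le⟩ := hP₀ x₀ hx₀'
  obtain ⟨hPx₁, hPx₁_le⟩ := hP₁ x₁ hx₁
  have hPsum : P x₀ + P x₁ = x := by rw [← map_add, hsum, hPx]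
  have hPx₁Z : P x₁ ∈ Z := by
    refine ⟨⟨?_, hPx₁⟩, x₁, rfl⟩
    rw [← add_sub_cancel_left (P x₀) (P x₁), hPsum]
    exact X₀.sub_mem hx₀ hPx₀
  calc N₀ x = N₀ (P x₀ + P x₁) := by rw [hPsum]
    _ ≤ N₀ (P x₀) + N₀ (P x₁) := h₀.add_le _ hPx₀ _ hPx₁Z.1.1
    _ ≤ N₀ x₀ + C * N₁ x₁ := by
        gcongr
        exact (hle _ hPx₁Z).trans (mul_le_mul_of_nonneg_left hPx₁_le hC)
    _ ≤ N₀ x₀ + t * N₁ x₁ := by gcongr; exact h₁.nonneg hx₁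

end KFunctional

/-- Proposition 3.10 (couples with a common 1-FDD): let `x ∈ X₀ ∩ X₁` and suppose there is a
linear map `P : U → U` with finite-dimensional range, fixing `x`, mapping `X₀` into `X₀` and
`X₁` into `X₁` without increasing the respective norms.  Then
`lim_{t→∞} K(x,t) = N₀ x` and `lim_{t→0⁺} K(x,t)/t = N₁ x`, i.e. the couple is normal at `x`. -/
theorem couple_normal_of_norm_one_projection
    {U : Type*} [AddCommGroup U] [Module ℂ U]
    (X₀ X₁ : Submodule ℂ U) (N₀ N₁ : U → ℝ)
    (h₀ : IsNormOn U X₀ N₀) (h₁ : IsNormOn U X₁ N₁)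
    (x : U) (hx₀ : x ∈ X₀) (hx₁ : x ∈ X₁)
    (P : U →ₗ[ℂ] U) (hPrange : FiniteDimensional ℂ (LinearMap.range P))
    (hPx : P x = x)
    (hP₀ : ∀ v ∈ X₀, P v ∈ X₀ ∧ N₀ (P v) ≤ N₀ v)
    (hP₁ : ∀ v ∈ X₁, P v ∈ X₁ ∧ N₁ (P v) ≤ N₁ v) :
    Tendsto (fun t : ℝ => Kfunctional X₀ X₁ N₀ N₁ x t) atTop (𝓝 (N₀ x)) ∧
    Tendsto (fun t : ℝ => Kfunctional X₀ X₁ N₀ N₁ x t / t) (𝓝[>] (0 : ℝ)) (𝓝 (N₁ x)) := by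
  constructor
  · exact tendsto_const_nhds.congr'
      ((eventually_Kfunctional_eq_left h₀ h₁ hx₀ P hPx hP₀ hP₁).mono fun _ => Eq.symm)
  · have hswap := tendsto_inv_nhdsGT_zero.eventually
      (eventually_Kfunctional_eq_left h₁ h₀ hx₁ P hPx hP₁ hP₀)
    refine tendsto_const_nhds.congr' ?_
    filter_upwards [hswap, self_mem_nhdsWithin] with t ht (htpos : 0 < t)
    rw [Kfunctional_div_eq_swap htpos, ht]
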